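/- For every integer k ≥ 1: every finite connected graph of metric dimension at most k has chromatic number at most 2^k, and there exists a finite connected graph of metric dimension at most k with chromatic number exactly 2^k. That is, the maximum possible chromatic number of a graph of metric dimension at most k is 2^k. -/

import Mathlib

/-!
Colouring each vertex by the parities of its distances to a resolving set `S` is proper: the two
ends of an edge are separated by some landmark, and their distances to it differ by exactly one.
This gives at most `2 ^ |S|` colours. Conversely, a clique on `{0,1}^k` plus `k` landmarks, the
`i`-th adjacent to the points with `i`-th coordinate `0`, is resolved by the landmarks (distance
`1` versus distance `≥ 2`), and contains a clique of size `2 ^ k`.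
-/

open SimpleGraph

/-- `S` is a resolving set for `G`: any two distinct vertices are distinguished
by their graph distance to some landmark in `S`. -/
def IsResolvingSet {V : Type*} (G : SimpleGraph V) (S : Set V) : Prop :=
  ∀ u v : V, u ≠ v → ∃ w ∈ S, G.dist u w ≠ G.dist v w

/-- The metric dimension of `G`: the least size of a (finite) resolving set. -/
noncomputable def metricDim {V : Type*} (G : SimpleGraph V) : ℕ :=
  sInf {k | ∃ S : Finset V, IsResolvingSet G ↑S ∧ S.card = k}

/-- Distance from an edge `e = {u,v}` to a vertex `w`: `min (d(u,w)) (d(v,w))`. -/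
noncomputable def edgeDist {V : Type*} (G : SimpleGraph V) (e : Sym2 V) (w : V) : ℕ :=
  Sym2.lift ⟨fun u v => min (G.dist u w) (G.dist v w), fun u v => by simp [min_comm]⟩ e

/-- `S` is an edge resolving set for `G`: any two distinct edges are distinguished
by their distance to some landmark in `S`. -/
def IsEdgeResolvingSet {V : Type*} (G : SimpleGraph V) (S : Set V) : Prop :=
  ∀ e ∈ G.edgeSet, ∀ f ∈ G.edgeSet, e ≠ f → ∃ w ∈ S, edgeDist G e w ≠ edgeDist G f w

/-- The edge metric dimension of `G`: the least size of a (finite) edge resolving set. -/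
noncomputable def edgeMetricDim {V : Type*} (G : SimpleGraph V) : ℕ :=
  sInf {k | ∃ S : Finset V, IsEdgeResolvingSet G ↑S ∧ S.card = k}

/-- `G` contains `H` as a subgraph: there is an injective graph homomorphism `H → G`. -/
def Contains {V W : Type*} (G : SimpleGraph V) (H : SimpleGraph W) : Prop :=
  ∃ f : H →g G, Function.Injective f

/-- The graph `D_k` on `ℤ_{≥0}^k`: distinct points are adjacent iff they differ
by at most 1 in every coordinate. -/
def Dgraph (k : ℕ) : SimpleGraph (Fin k → ℕ) where
  Adj x y := x ≠ y ∧ ∀ i, x i ≤ y i + 1 ∧ y i ≤ x i + 1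
  symm := ⟨fun _x _y h => ⟨h.1.symm, fun i => ⟨(h.2 i).2, (h.2 i).1⟩⟩⟩
  loopless := ⟨fun _x h => h.1 rfl⟩

section Resolving

variable {V : Type*} {G : SimpleGraph V}

lemma SimpleGraph.Adj.natCast_dist_ne_of_dist_ne {u v w : V} (h : G.Adj u v)
    (hne : G.dist u w ≠ G.dist v w) : (G.dist u w : ZMod 2) ≠ G.dist v w := by
  have hstep : G.dist v w = G.dist u w + 1 ∨ G.dist u w = G.dist v w + 1 := by
    have := h.symm.diff_dist_adj (u := w)
    rw [dist_comm (u := w), dist_comm (u := w)] at this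
    omega
  have hsucc (a : ZMod 2) : a ≠ a + 1 := by revert a; decide
  rcases hstep with h' | h'
  · rw [h', Nat.cast_succ]; exact hsucc _
  · rw [h', Nat.cast_succ]; exact (hsucc _).symm

lemma IsResolvingSet.colorable {S : Finset V} (hS : IsResolvingSet G S) :
    G.Colorable (2 ^ S.card) := by
  classical
  let C : G.Coloring (S → ZMod 2) := Coloring.mk (fun v w => (G.dist v w : ZMod 2)) <| by
    intro u v huv hcol
    obtain ⟨w, hwS, hw⟩ := hS u v huv.ne
    exact huv.natCast_dist_ne_of_dist_ne hw (congrFun hcol ⟨w, hwS⟩)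
  simpa using C.colorable

lemma isResolvingSet_of_forall_notMem (hG : G.Connected) {S : Set V}
    (h : ∀ u v, u ∉ S → v ∉ S → u ≠ v → ∃ w ∈ S, G.dist u w ≠ G.dist v w) :
    IsResolvingSet G S := by
  intro u v huv
  by_cases hu : u ∈ S
  · exact ⟨u, hu, fun hd => (hG.pos_dist_of_ne huv.symm).ne' (hd.symm.trans dist_self)⟩
  by_cases hv : v ∈ S
  · exact ⟨v, hv, fun hd => (hG.pos_dist_of_ne huv).ne' (hd.trans dist_self)⟩
  exact h u v hu hv huv

lemma metricDim_le {S : Finset V} (hS : IsResolvingSet G S) : metricDim G ≤ S.card :=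
  Nat.sInf_le ⟨S, hS, rfl⟩

lemma exists_isResolvingSet_card_eq_metricDim [Fintype V] (hG : G.Connected) :
    ∃ S : Finset V, IsResolvingSet G S ∧ S.card = metricDim G := by
  have huniv : IsResolvingSet G (Finset.univ : Finset V) :=
    isResolvingSet_of_forall_notMem hG (by simp)
  exact Nat.sInf_mem (s := {k | ∃ S : Finset V, IsResolvingSet G S ∧ S.card = k})
    ⟨_, Finset.univ, huniv, rfl⟩

lemma chromaticNumber_le_two_pow_metricDim [Fintype V] (hG : G.Connected) :
    G.chromaticNumber ≤ ((2 ^ metricDim G : ℕ) : ℕ∞) := by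
  obtain ⟨S, hS, hcard⟩ := exists_isResolvingSet_card_eq_metricDim hG
  exact hcard ▸ hS.colorable.chromaticNumber_le

end Resolving

def landmarkGraph (ι : Type*) : SimpleGraph ((ι → Fin 2) ⊕ ι) where
  Adj u v := match u, v with
    | .inl x, .inl y => x ≠ y
    | .inl x, .inr i => x i = 0
    | .inr i, .inl x => x i = 0
    | .inr _, .inr _ => False
  symm := ⟨by rintro (x | i) (y | j) h <;> simp_all [eq_comm]⟩
  loopless := ⟨by rintro (x | i) h <;> simp_all⟩

namespace landmarkGraph

variable {ι : Type*}

lemma connected : (landmarkGraph ι).Connected := by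
  have hreach : ∀ v, (landmarkGraph ι).Reachable v (.inl 0) := by
    rintro (x | i)
    · by_cases hx : x = 0
      · rw [hx]
      · exact Adj.reachable (G := landmarkGraph ι) hx
    · exact Adj.reachable (G := landmarkGraph ι) rfl
  exact (connected_iff _).mpr ⟨fun u v => (hreach u).trans (hreach v).symm, ⟨.inl 0⟩⟩

lemma isResolvingSet : IsResolvingSet (landmarkGraph ι) (Set.range Sum.inr) := by
  refine isResolvingSet_of_forall_notMem connected ?_
  rintro (x | i) (y | j) hu hv hxy
  · obtain ⟨i, hi⟩ := Function.ne_iff.mp fun h => hxy (congrArg Sum.inl h)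
    refine ⟨.inr i, Set.mem_range_self i, fun hd => ?_⟩
    have hadj :
        (landmarkGraph ι).Adj (.inl x) (.inr i) ↔ (landmarkGraph ι).Adj (.inl y) (.inr i) := by
      rw [← dist_eq_one_iff_adj, ← dist_eq_one_iff_adj, hd]
    change x i = 0 ↔ y i = 0 at hadj
    omega
  all_goals simp at hu hv

lemma metricDim_le [Fintype ι] : metricDim (landmarkGraph ι) ≤ Fintype.card ι := by
  classical
  simpa [Finset.card_image_of_injective _ Sum.inr_injective] using
    _root_.metricDim_le (S := Finset.univ.image Sum.inr) (by simpa using isResolvingSet)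

lemma chromaticNumber_eq [Fintype ι] [DecidableEq ι] :
    (landmarkGraph ι).chromaticNumber = ((2 ^ Fintype.card ι : ℕ) : ℕ∞) := by
  refine le_antisymm ((chromaticNumber_le_two_pow_metricDim connected).trans ?_) ?_
  · exact_mod_cast Nat.pow_le_pow_right two_pos metricDim_le
  · have hclique := chromaticNumber_mono_of_hom
      (⟨Sum.inl, id⟩ : (⊤ : SimpleGraph (ι → Fin 2)) →g landmarkGraph ι)
    simpa using hclique

end landmarkGraph

theorem statement8_general (k : ℕ) :
    (∀ (V : Type) [Fintype V], ∀ G : SimpleGraph V, G.Connected → metricDim G ≤ k →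
      G.chromaticNumber ≤ ((2 ^ k : ℕ) : ℕ∞)) ∧
    (∃ (V : Type) (_ : Fintype V) (G : SimpleGraph V), G.Connected ∧ metricDim G ≤ k ∧
      G.chromaticNumber = ((2 ^ k : ℕ) : ℕ∞)) := by
  refine ⟨fun V _ G hG hdim => ?_, _, inferInstance, landmarkGraph (Fin k),
    landmarkGraph.connected, ?_, ?_⟩
  · exact (chromaticNumber_le_two_pow_metricDim hG).trans
      (by exact_mod_cast Nat.pow_le_pow_right two_pos hdim)
  · simpa using landmarkGraph.metricDim_le (ι := Fin k)
  · simpa using landmarkGraph.chromaticNumber_eq (ι := Fin k)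

/-- the maximum possible chromatic number of a (finite connected) graph
of metric dimension at most `k` is `2^k`. -/
theorem statement8 (k : ℕ) (hk : 1 ≤ k) :
    (∀ (V : Type) [Fintype V], ∀ G : SimpleGraph V, G.Connected → metricDim G ≤ k →
      G.chromaticNumber ≤ ((2 ^ k : ℕ) : ℕ∞)) ∧
    (∃ (V : Type) (_ : Fintype V) (G : SimpleGraph V), G.Connected ∧ metricDim G ≤ k ∧
      G.chromaticNumber = ((2 ^ k : ℕ) : ℕ∞)) :=
  statement8_general k
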